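/- arXiv:1503.07299 — 6 statements merged into one kernel-verified Lean document; each statement's English description precedes it below -/
import Mathlib

section
/- If the integers satisfy L_1 ≥ L_2 ≥ ... ≥ L_k > 0, then the polynomial L_k·X^k + L_{k-1}·X^{k-1} + ... + L_1·X − 1 is irreducible over the rationals. -/
open Polynomial Finset

/-!
Put `P = ∑ Lᵢ Xⁱ - 1 ∈ ℤ[X]`. Multiplying `∑ Lᵢ zⁱ = 1` by `1 - z` gives
`(L₁ + 1) z - 1 = ∑_{1≤i<k} (Lᵢ - Lᵢ₊₁) z^{i+1} + L_k z^{k+1}`, a polynomial with nonnegative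
coefficients. For a root with `|z| ≤ 1`, the triangle inequality applied to this identity and to
`∑ Lᵢ zⁱ = 1` forces `z = |z|`, so the only root of `P` in the closed unit disc is its unique
positive root, where `P' > 0`. On the other hand every nonconstant factor of `P` in `ℤ[X]` has
constant term `±1`, hence a complex root of modulus at most `1`; two such factors would make that
root a double root of `P`.
-/

section UnitDisc

theorem Multiset.one_lt_nnnorm_prod {α : Type*} [NormedField α] {s : Multiset α} (hs : s ≠ 0)
    (h : ∀ z ∈ s, 1 < ‖z‖₊) : 1 < ‖s.prod‖₊ := by
  rw [← nnnormHom_apply, map_multiset_prod]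
  obtain ⟨l⟩ := s
  simp only [Multiset.quot_mk_to_coe'', Multiset.map_coe, Multiset.prod_coe] at *
  exact List.one_lt_prod_of_one_lt _ (by simpa using h) (by simpa using hs)

theorem Polynomial.exists_isRoot_norm_le_one {p : ℂ[X]} (hp : 0 < p.natDegree)
    (h0 : ‖p.coeff 0‖ ≤ ‖p.leadingCoeff‖) : ∃ z, p.IsRoot z ∧ ‖z‖ ≤ 1 := by
  by_contra! hroots
  have hsplit : p.Splits := IsAlgClosed.splits p
  have hprod : 1 < ‖p.roots.prod‖ := by
    have hne : p.roots ≠ 0 := by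
      rw [← Multiset.card_pos, ← hsplit.natDegree_eq_card_roots]
      exact hp
    exact_mod_cast Multiset.one_lt_nnnorm_prod hne fun z hz =>
      mod_cast hroots z (isRoot_of_mem_roots hz)
  have hlead : 0 < ‖p.leadingCoeff‖ :=
    norm_pos_iff.mpr (leadingCoeff_ne_zero.mpr (ne_zero_of_natDegree_gt hp))
  rw [hsplit.coeff_zero_eq_leadingCoeff_mul_prod_roots, norm_mul, norm_mul, norm_pow, norm_neg,
    norm_one, one_pow, one_mul] at h0
  nlinarith

theorem Polynomial.exists_aeval_eq_zero_norm_le_one {p : ℤ[X]} (hp : ¬IsUnit p)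
    (h0 : IsUnit (p.coeff 0)) : ∃ z : ℂ, aeval z p = 0 ∧ ‖z‖ ≤ 1 := by
  have hdeg : 0 < p.natDegree := by
    refine Nat.pos_of_ne_zero fun hdeg => hp ?_
    rw [eq_C_of_natDegree_eq_zero hdeg]
    exact isUnit_C.mpr h0
  have hinj : Function.Injective (algebraMap ℤ ℂ) := (algebraMap ℤ ℂ).injective_int
  have hcoeff : ‖algebraMap ℤ ℂ (p.coeff 0)‖ ≤ ‖algebraMap ℤ ℂ p.leadingCoeff‖ := by
    rw [algebraMap_int_eq, eq_intCast, eq_intCast, Complex.norm_intCast, Complex.norm_intCast]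
    exact_mod_cast (Int.isUnit_iff_abs_eq.mp h0).trans_le
      (Int.one_le_abs (leadingCoeff_ne_zero.mpr (ne_zero_of_natDegree_gt hdeg)))
  obtain ⟨z, hz, hnorm⟩ := exists_isRoot_norm_le_one (p := p.map (algebraMap ℤ ℂ))
    (by rwa [natDegree_map_eq_of_injective hinj])
    (by rwa [coeff_map, leadingCoeff_map_of_injective hinj])
  exact ⟨z, by rwa [IsRoot, eval_map_algebraMap] at hz, hnorm⟩

theorem Polynomial.irreducible_of_roots_norm_le_one {p : ℤ[X]} (hp : ¬IsUnit p)
    (h0 : IsUnit (p.coeff 0)) (huniq : {z : ℂ | ‖z‖ ≤ 1 ∧ aeval z p = 0}.Subsingleton)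
    (hsimple : ∀ z : ℂ, ‖z‖ ≤ 1 → aeval z p = 0 → aeval z (derivative p) ≠ 0) :
    Irreducible p := by
  refine ⟨hp, fun a b hab => ?_⟩
  rw [hab, mul_coeff_zero] at h0
  by_contra! hab'
  obtain ⟨za, hza, hza1⟩ := exists_aeval_eq_zero_norm_le_one hab'.1 (isUnit_of_mul_isUnit_left h0)
  obtain ⟨zb, hzb, hzb1⟩ := exists_aeval_eq_zero_norm_le_one hab'.2 (isUnit_of_mul_isUnit_right h0)
  have hpa : aeval za p = 0 := by rw [hab, map_mul, hza, zero_mul]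
  have hpb : aeval zb p = 0 := by rw [hab, map_mul, hzb, mul_zero]
  have hzab : za = zb := huniq ⟨hza1, hpa⟩ ⟨hzb1, hpb⟩
  apply hsimple za hza1 hpa
  rw [hab, derivative_mul, map_add, map_mul, map_mul, hza, hzab, hzb]
  ring

theorem Complex.one_le_re_of_norm_mul_sub_one_le {z : ℂ} (hz : ‖z‖ = 1) {c : ℝ} (hc : 0 < c)
    (h : ‖c * z - 1‖ ≤ c - 1) : 1 ≤ z.re := by
  have h1 : z.re * z.re + z.im * z.im = 1 := by
    rw [← Complex.normSq_apply, ← Complex.sq_norm, hz, one_pow]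
  have h2 : (c * z.re - 1) * (c * z.re - 1) + (c * z.im) * (c * z.im) ≤ (c - 1) ^ 2 := by
    simpa [Complex.sq_norm, Complex.normSq_apply] using pow_le_pow_left₀ (norm_nonneg _) h 2
  nlinarith

end UnitDisc

section Brauer

variable {R : Type*} [CommRing R] {k : ℕ} {L : ℕ → ℕ}

def brauerSum (k : ℕ) (L : ℕ → ℕ) (u : R) : R := ∑ i ∈ Icc 1 k, (L i : R) * u ^ i

def brauerTail (k : ℕ) (L : ℕ → ℕ) (u : R) : R :=
  ∑ i ∈ Ico 1 k, ((L i : R) - L (i + 1)) * u ^ (i + 1) + L k * u ^ (k + 1)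

theorem one_sub_mul_brauerSum (hk : 1 ≤ k) (u : R) :
    (1 - u) * brauerSum k L u = L 1 * u - brauerTail k L u := by
  induction k, hk using Nat.le_induction with
  | base => simp [brauerSum, brauerTail]; ring
  | succ n hn ih =>
    rw [brauerSum, sum_Icc_succ_top (by omega), brauerTail, sum_Ico_succ_top hn]
    rw [brauerSum, brauerTail] at ih
    linear_combination ih

theorem brauerTail_one (hk : 1 ≤ k) : brauerTail k L (1 : R) = L 1 := by
  linear_combination one_sub_mul_brauerSum (L := L) hk (1 : R)

theorem norm_brauerTail_le (hL : AntitoneOn L (Set.Icc 1 k)) (z : ℂ) :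
    ‖brauerTail k L z‖ ≤ brauerTail k L ‖z‖ := by
  refine (norm_add_le _ _).trans
    (add_le_add ((norm_sum_le _ _).trans (sum_le_sum fun i hi => ?_)) ?_)
  · simp only [mem_Ico] at hi
    have : L (i + 1) ≤ L i := hL ⟨hi.1, by omega⟩ ⟨by omega, hi.2⟩ (by omega)
    rw [norm_mul, norm_pow, ← Nat.cast_sub this, Complex.norm_natCast, Nat.cast_sub this]
  · simp

theorem brauerSum_ofReal (x : ℝ) : brauerSum k L (x : ℂ) = brauerSum k L x := by
  simp [brauerSum]

theorem strictMonoOn_brauerSum (hk : 1 ≤ k) (hL1 : 0 < L 1) :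
    StrictMonoOn (brauerSum k L : ℝ → ℝ) (Set.Ici 0) := by
  intro x hx y hy hxy
  apply sum_lt_sum (fun i _ => by gcongr)
  exact ⟨1, mem_Icc.mpr ⟨le_rfl, hk⟩, by simp only [pow_one]; gcongr⟩

theorem norm_le_re_of_brauerSum_eq_one (hk : 1 ≤ k) (hL1 : 0 < L 1) {z : ℂ}
    (hroot : brauerSum k L z = 1) (hle : brauerSum k L ‖z‖ ≤ 1) : ‖z‖ ≤ z.re := by
  have hre : ∑ i ∈ Icc 1 k, (L i : ℝ) * (z ^ i).re = 1 := by
    simpa [brauerSum, Complex.re_sum] using congrArg Complex.re hroot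
  have hterm : (L 1 : ℝ) * (‖z‖ - z.re) ≤ ∑ i ∈ Icc 1 k, (L i : ℝ) * (‖z‖ ^ i - (z ^ i).re) := by
    have := single_le_sum (f := fun i => (L i : ℝ) * (‖z‖ ^ i - (z ^ i).re))
      (fun i _ => mul_nonneg (Nat.cast_nonneg _)
        (sub_nonneg.mpr (norm_pow z i ▸ Complex.re_le_norm _)))
      (mem_Icc.mpr ⟨le_rfl, hk⟩)
    simpa using this
  have hsum : ∑ i ∈ Icc 1 k, (L i : ℝ) * (‖z‖ ^ i - (z ^ i).re) = brauerSum k L ‖z‖ - 1 := by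
    simp only [mul_sub, sum_sub_distrib, hre, brauerSum]
  have : (0 : ℝ) < L 1 := by exact_mod_cast hL1
  nlinarith

open scoped ComplexOrder in
theorem eq_norm_of_brauerSum_eq_one (hk : 1 ≤ k) (hL : AntitoneOn L (Set.Icc 1 k))
    (hL1 : 0 < L 1) {z : ℂ} (hz : ‖z‖ ≤ 1) (hroot : brauerSum k L z = 1) : z = ‖z‖ := by
  have htail : brauerTail k L z = (L 1 + 1) * z - 1 := by
    linear_combination (z - 1) * hroot + one_sub_mul_brauerSum hk z
  have hbound := norm_brauerTail_le hL z
  rw [htail] at hbound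
  have hre : ‖z‖ ≤ z.re := by
    rcases hz.lt_or_eq with hlt | heq
    · refine norm_le_re_of_brauerSum_eq_one hk hL1 hroot ?_
      have hreal := one_sub_mul_brauerSum (L := L) hk ‖z‖
      have : (L 1 + 1) * ‖z‖ - 1 ≤ ‖(L 1 + 1) * z - 1‖ := by
        have hc : ‖(L 1 + 1 : ℂ)‖ = L 1 + 1 := mod_cast Complex.norm_natCast (L 1 + 1)
        simpa [norm_mul, hc] using norm_sub_norm_le ((L 1 + 1 : ℂ) * z) 1
      nlinarith
    · rw [heq, brauerTail_one hk] at hbound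
      rw [heq]
      exact Complex.one_le_re_of_norm_mul_sub_one_le heq (c := L 1 + 1) (by positivity)
        (by push_cast; simpa using hbound)
  have h0 : 0 ≤ z := Complex.re_eq_norm.mp (le_antisymm (Complex.re_le_norm z) hre)
  rw [← Complex.re_eq_norm.mpr h0]
  exact Complex.eq_re_of_ofReal_le (r := 0) (by simpa using h0)

noncomputable def brauerPoly (k : ℕ) (L : ℕ → ℕ) : ℤ[X] := ∑ i ∈ Icc 1 k, C (L i : ℤ) * X ^ i - 1

theorem aeval_brauerPoly {A : Type*} [CommRing A] (z : A) :
    aeval z (brauerPoly k L) = brauerSum k L z - 1 := by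
  simp [brauerPoly, brauerSum]

theorem coeff_zero_brauerPoly : (brauerPoly k L).coeff 0 = -1 := by
  simp [brauerPoly, coeff_X_pow]

theorem isPrimitive_brauerPoly : (brauerPoly k L).IsPrimitive := fun r hr =>
  isUnit_of_dvd_unit (coeff_zero_brauerPoly (k := k) (L := L) ▸ (C_dvd_iff_dvd_coeff r _).mp hr 0)
    isUnit_one.neg

theorem map_brauerPoly : (brauerPoly k L).map (Int.castRingHom ℚ) =
    ∑ i ∈ Icc 1 k, C (L i : ℚ) * X ^ i - 1 := by
  simp [brauerPoly, Polynomial.map_sum]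

theorem aeval_derivative_brauerPoly_pos (hk : 1 ≤ k) (hL1 : 0 < L 1) {x : ℝ} (hx : 0 ≤ x) :
    0 < aeval x (derivative (brauerPoly k L)) := by
  simp only [brauerPoly, derivative_sub, derivative_one, sub_zero, derivative_C_mul_X_pow,
    map_sum, map_mul, aeval_C, aeval_X_pow]
  refine sum_pos' (fun i _ => by positivity) ⟨1, mem_Icc.mpr ⟨le_rfl, hk⟩, ?_⟩
  simpa using hL1

theorem not_isUnit_brauerPoly (hk : 1 ≤ k) (hL1 : 0 < L 1) : ¬IsUnit (brauerPoly k L) := by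
  intro hu
  have := aeval_derivative_brauerPoly_pos (L := L) hk hL1 le_rfl
  rw [derivative_of_natDegree_zero (natDegree_eq_zero_of_isUnit hu), map_zero] at this
  exact this.false

theorem irreducible_brauerPoly (hk : 1 ≤ k) (hL : AntitoneOn L (Set.Icc 1 k)) (hLk : 0 < L k) :
    Irreducible (brauerPoly k L) := by
  have hL1 : 0 < L 1 := hLk.trans_le (hL ⟨le_rfl, hk⟩ ⟨hk, le_rfl⟩ hk)
  have hroot : ∀ z : ℂ, ‖z‖ ≤ 1 → aeval z (brauerPoly k L) = 0 →
      z = ‖z‖ ∧ brauerSum k L ‖z‖ = 1 := by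
    intro z hz h
    rw [aeval_brauerPoly, sub_eq_zero] at h
    have hz' := eq_norm_of_brauerSum_eq_one hk hL hL1 hz h
    rw [hz', brauerSum_ofReal] at h
    exact ⟨hz', mod_cast h⟩
  refine irreducible_of_roots_norm_le_one (not_isUnit_brauerPoly hk hL1)
    (by simp [coeff_zero_brauerPoly]) ?_ ?_
  · rintro z ⟨hz, hz0⟩ w ⟨hw, hw0⟩
    obtain ⟨hz', hzs⟩ := hroot z hz hz0
    obtain ⟨hw', hws⟩ := hroot w hw hw0
    rw [hz', hw', (strictMonoOn_brauerSum hk hL1).injOn (norm_nonneg z) (norm_nonneg w)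
      (hzs.trans hws.symm)]
  · intro z hz hz0
    rw [(hroot z hz hz0).1, ← Complex.coe_algebraMap, aeval_algebraMap_apply,
      Complex.coe_algebraMap, Complex.ofReal_ne_zero]
    exact (aeval_derivative_brauerPoly_pos hk hL1 (norm_nonneg z)).ne'

end Brauer

/-- If the integers satisfy L_1 ≥ L_2 ≥ ... ≥ L_k > 0, then the polynomial
L_k·X^k + ... + L_1·X − 1 is irreducible over the rationals. -/
theorem stmt1 (k : ℕ) (hk : 1 ≤ k) (L : ℕ → ℕ)
    (hmono : ∀ i j, 1 ≤ i → i ≤ j → j ≤ k → L j ≤ L i) (hpos : 1 ≤ L k) :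
    Irreducible ((∑ i ∈ Finset.Icc 1 k, Polynomial.C ((L i : ℚ)) * Polynomial.X ^ i) - 1) := by
  have hanti : AntitoneOn L (Set.Icc 1 k) := fun i hi j hj hij => hmono i j hi.1 hij hj.2
  rw [← map_brauerPoly]
  exact (IsPrimitive.Int.irreducible_iff_irreducible_map_cast isPrimitive_brauerPoly).mp
    (irreducible_brauerPoly hk hanti hpos)
end

section
/- If L_1 ≥ L_2 ≥ ... ≥ L_k > 0 are integers, then the reciprocal 1/β of the unique root β ∈ (0,1) of L_1·X + ... + L_k·X^k = 1 is a Pisot number: it is a real algebraic integer greater than 1 all of whose other Galois conjugates have absolute value strictly less than 1. -/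
/-!
`β⁻¹` is a root of the monic integer polynomial `X ^ k - ∑ Lᵢ X ^ (k - i)`. If `z ≠ β⁻¹` were
another root with `‖z‖ ≥ 1`, then `w = z⁻¹` would satisfy `∑ Lᵢ wⁱ = 1` and `‖w‖ ≤ 1`. Dividing
`1 - ∑ Lᵢ Xⁱ` by `β - X` gives a quotient whose coefficients `dⱼ = ∑_{i > j} Lᵢ β^(i-j-1)` are
positive and strictly decreasing because `L` is, so by the Eneström–Kakeya argument it has no zero
in the closed unit disc; hence `w = β`.
-/

open Finset Polynomial

theorem sum_Icc_one_eq_sum_range {M : Type*} [AddCommMonoid M] (f : ℕ → M) (k : ℕ) :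
    ∑ i ∈ Icc 1 k, f i = ∑ m ∈ range k, f (m + 1) := by
  rw [range_eq_Ico, sum_Ico_add' f 0 k 1, zero_add, Ico_add_one_right_eq_Icc]

-- Synthetic division by `b - X`, written as a telescoping sum.
theorem sub_mul_sum_range_add_sum_range_eq {R : Type*} [CommRing R] (b w : R) (d : ℕ → R)
    {n : ℕ} (hdn : d n = 0) :
    (b - w) * ∑ m ∈ range n, d m * w ^ m + ∑ m ∈ range n, (d m - b * d (m + 1)) * w ^ (m + 1)
      = b * d 0 := by
  calc _ = ∑ m ∈ range n, (b * d m * w ^ m - b * d (m + 1) * w ^ (m + 1)) := by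
        rw [mul_sum, ← sum_add_distrib]
        exact sum_congr rfl fun m _ => by ring
    _ = b * d 0 := (sum_range_sub' (fun m => b * d m * w ^ m) n).trans (by simp [hdn])

theorem sum_range_mul_pow_ne_zero_of_strictAntiOn {n : ℕ} (hn : 0 < n) {a : ℕ → ℝ}
    (ha : StrictAntiOn a (Set.Iic n)) (han : a n = 0) {z : ℂ} (hz : ‖z‖ ≤ 1) :
    ∑ m ∈ range n, (a m : ℂ) * z ^ m ≠ 0 := by
  intro hQ
  have ha_pos : ∀ m ∈ range n, 0 < a m := fun m hm =>
    han ▸ ha (Set.mem_Iic.2 (mem_range.1 hm).le) (Set.mem_Iic.2 le_rfl) (mem_range.1 hm)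
  have hgap : ∀ m ∈ range n, 0 < a m - a (m + 1) := fun m hm =>
    sub_pos.2 <| ha (Set.mem_Iic.2 (mem_range.1 hm).le)
      (Set.mem_Iic.2 (mem_range.1 hm)) (Nat.lt_succ_self m)
  have hsum : ∑ m ∈ range n, ((a m - a (m + 1) : ℝ) : ℂ) * z ^ (m + 1) = a 0 := by
    have h := sub_mul_sum_range_add_sum_range_eq 1 z (fun m => (a m : ℂ)) (n := n) (by simp [han])
    simpa [hQ] using h
  -- Real part of `hsum`, using `∑ (aₘ - aₘ₊₁) = a₀`.
  have hre : ∑ m ∈ range n, (a m - a (m + 1)) * (1 - (z ^ (m + 1)).re) = 0 := by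
    have h := congrArg Complex.re hsum
    simp only [Complex.re_sum, Complex.re_ofReal_mul, Complex.ofReal_re] at h
    simp only [mul_sub, mul_one, sum_sub_distrib, sum_range_sub' a, han, h, sub_zero, sub_self]
  have hterm_nonneg : ∀ m ∈ range n, 0 ≤ (a m - a (m + 1)) * (1 - (z ^ (m + 1)).re) :=
    fun m hm => mul_nonneg (hgap m hm).le <| sub_nonneg.2 <|
      (Complex.re_le_norm _).trans <| (norm_pow z (m + 1)).trans_le (pow_le_one₀ (norm_nonneg z) hz)
  have h0 := (sum_eq_zero_iff_of_nonneg hterm_nonneg).1 hre 0 (mem_range.2 hn)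
  have hre1 : z.re = 1 := by
    rw [zero_add, pow_one] at h0
    linarith [(mul_eq_zero.1 h0).resolve_left (hgap 0 (mem_range.2 hn)).ne']
  have hz1 : z = 1 := by
    have hnorm : ‖z‖ = 1 := le_antisymm hz (hre1 ▸ Complex.re_le_norm z)
    exact Complex.ext hre1 (Complex.abs_re_eq_norm.1 (by rw [hre1, hnorm, abs_one]))
  subst hz1
  have hpos : (0 : ℝ) < ∑ m ∈ range n, a m := sum_pos ha_pos (nonempty_range_iff.2 hn.ne')
  exact hpos.ne' (by exact_mod_cast (by simpa using hQ : ∑ m ∈ range n, (a m : ℂ) = 0))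

-- `dⱼ = c_{j+1} + c_{j+2} b + ⋯ + c_k b^(k-j-1)`. When `∑ cᵢ bⁱ = 1` these are the
-- coefficients of the quotient of `1 - ∑ cᵢ Xⁱ` by `b - X`.
def tailCoeff (c : ℕ → ℝ) (b : ℝ) (k j : ℕ) : ℝ :=
  ∑ m ∈ range (k - j), c (j + 1 + m) * b ^ m

namespace tailCoeff

variable (c : ℕ → ℝ) (b : ℝ) (k : ℕ)

@[simp]
theorem self : tailCoeff c b k k = 0 := by
  simp [tailCoeff]

theorem eq_add_mul {j : ℕ} (hj : j < k) :
    tailCoeff c b k j = c (j + 1) + b * tailCoeff c b k (j + 1) := by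
  rw [tailCoeff, tailCoeff, show k - j = k - (j + 1) + 1 by omega, sum_range_succ', mul_sum,
    add_zero, pow_zero, mul_one, add_comm]
  congr 1
  exact sum_congr rfl fun m _ => by rw [show j + 1 + (m + 1) = j + 1 + 1 + m by omega]; ring

theorem _root_.mul_tailCoeff_zero : b * tailCoeff c b k 0 = ∑ i ∈ Icc 1 k, c i * b ^ i := by
  rw [tailCoeff, mul_sum, sum_Icc_one_eq_sum_range, Nat.sub_zero]
  exact sum_congr rfl fun m _ => by rw [zero_add, add_comm 1 m]; ring

theorem strictAntiOn {b : ℝ} (hb0 : 0 < b) (hb1 : b ≤ 1) (hc : AntitoneOn c (Set.Icc 1 k))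
    (hck : 0 < c k) : StrictAntiOn (tailCoeff c b k) (Set.Iic k) := by
  refine strictAntiOn_Iic_of_succ_lt fun j hj => ?_
  rw [Order.succ_eq_add_one, eq_add_mul c b k hj]
  have hcj : 0 < c (j + 1) :=
    hck.trans_le <| hc ⟨by omega, by omega⟩ ⟨by omega, le_rfl⟩ (by omega)
  have hle : tailCoeff c b k (j + 1) ≤ c (j + 1) * ∑ m ∈ range (k - (j + 1)), b ^ m := by
    rw [tailCoeff, mul_sum]
    gcongr with m hm
    exact hc ⟨by omega, by omega⟩ ⟨by omega, by rw [mem_range] at hm; omega⟩ (by omega)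
  have hgap : (1 - b) * tailCoeff c b k (j + 1) < c (j + 1) :=
    calc (1 - b) * tailCoeff c b k (j + 1)
      _ ≤ (1 - b) * (c (j + 1) * ∑ m ∈ range (k - (j + 1)), b ^ m) := by gcongr
      _ = c (j + 1) * (1 - b ^ (k - (j + 1))) := by rw [← mul_neg_geom_sum]; ring
      _ < c (j + 1) := by nlinarith [pow_pos hb0 (k - (j + 1))]
  linarith

end tailCoeff

theorem eq_of_sum_mul_pow_eq_one {k : ℕ} (hk : 1 ≤ k) {c : ℕ → ℝ}
    (hc : AntitoneOn c (Set.Icc 1 k)) (hck : 0 < c k) {β : ℝ} (hβ0 : 0 < β) (hβ1 : β ≤ 1)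
    (hβ : ∑ i ∈ Icc 1 k, c i * β ^ i = 1) {w : ℂ} (hw : ∑ i ∈ Icc 1 k, (c i : ℂ) * w ^ i = 1)
    (hw1 : ‖w‖ ≤ 1) : w = β := by
  set d := tailCoeff c β k
  have hQ : ∑ m ∈ range k, (d m : ℂ) * w ^ m ≠ 0 :=
    sum_range_mul_pow_ne_zero_of_strictAntiOn hk (tailCoeff.strictAntiOn c k hβ0 hβ1 hc hck)
      (tailCoeff.self c β k) hw1
  have hid := sub_mul_sum_range_add_sum_range_eq (β : ℂ) w (fun m => (d m : ℂ)) (n := k)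
    (by simp [d])
  have hrem : ∑ m ∈ range k, ((d m : ℂ) - β * d (m + 1)) * w ^ (m + 1) = 1 := by
    rw [← hw, sum_Icc_one_eq_sum_range]
    refine sum_congr rfl fun m hm => ?_
    rw [show d m = _ from tailCoeff.eq_add_mul c β k (mem_range.1 hm)]
    push_cast
    ring
  have hd0 : (β : ℂ) * d 0 = 1 := by exact_mod_cast (mul_tailCoeff_zero c β k).trans hβ
  simp only [hrem, hd0] at hid
  have hmul : ((β : ℂ) - w) * ∑ m ∈ range k, (d m : ℂ) * w ^ m = 0 := by
    linear_combination hid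
  exact (sub_eq_zero.1 ((mul_eq_zero.1 hmul).resolve_right hQ)).symm

noncomputable def recurrencePoly {R : Type*} [CommRing R] (c : ℕ → R) (k : ℕ) : R[X] :=
  X ^ k - ∑ i ∈ Icc 1 k, C (c i) * X ^ (k - i)

section recurrencePoly

variable {R : Type*} [CommRing R] (c : ℕ → R) (k : ℕ)

theorem recurrencePoly_monic : (recurrencePoly c k).Monic := by
  refine monic_X_pow_sub <| (degree_sum_le _ _).trans_lt <|
    (Finset.sup_lt_iff (WithBot.bot_lt_coe k)).2 fun i hi => ?_
  have hi := mem_Icc.1 hi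
  exact (degree_C_mul_X_pow_le _ _).trans_lt (WithBot.coe_lt_coe.2 (Nat.sub_lt (by omega) hi.1))

theorem aeval_recurrencePoly {K : Type*} [Field K] [Algebra R K] {z : K} (hz : z ≠ 0) :
    aeval z (recurrencePoly c k) = z ^ k * (1 - ∑ i ∈ Icc 1 k, algebraMap R K (c i) * z⁻¹ ^ i) := by
  simp only [recurrencePoly, map_sub, map_sum, map_mul, aeval_X_pow, aeval_C, mul_sub, mul_one,
    mul_sum]
  congr 1
  refine sum_congr rfl fun i hi => ?_
  rw [pow_sub₀ z hz (mem_Icc.1 hi).2, inv_pow]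
  ring

end recurrencePoly

/-- If L_1 ≥ L_2 ≥ ... ≥ L_k > 0 are integers, then the reciprocal 1/β of the unique root
β ∈ (0,1) of L_1·X + ... + L_k·X^k = 1 is a Pisot number: a real algebraic integer greater
than 1 all of whose other Galois conjugates (i.e. complex roots of its minimal polynomial)
have absolute value strictly less than 1. -/
theorem stmt2 (k : ℕ) (hk : 1 ≤ k) (L : ℕ → ℕ)
    (hmono : ∀ i j, 1 ≤ i → i ≤ j → j ≤ k → L j ≤ L i) (hpos : 1 ≤ L k)
    (β : ℝ) (hβ0 : 0 < β) (hβ1 : β < 1)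
    (hroot : ∑ i ∈ Finset.Icc 1 k, (L i : ℝ) * β ^ i = 1) :
    IsIntegral ℤ β⁻¹ ∧ 1 < β⁻¹ ∧
      ∀ z : ℂ, Polynomial.aeval z (minpoly ℚ β⁻¹) = 0 → z ≠ ((β⁻¹ : ℝ) : ℂ) →
        ‖z‖ < 1 := by
  set p := recurrencePoly (fun i => (L i : ℤ)) k
  have hp : aeval β⁻¹ p = 0 := by
    simp [p, aeval_recurrencePoly _ _ (inv_ne_zero hβ0.ne'), hroot]
  refine ⟨⟨p, recurrencePoly_monic _ _, by rwa [← aeval_def]⟩, (one_lt_inv₀ hβ0).2 hβ1,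
    fun z hz hzβ => ?_⟩
  by_contra! hz1
  have hz0 : z ≠ 0 := by rintro rfl; norm_num at hz1
  have hpz : aeval z p = 0 := by
    obtain ⟨q, hq⟩ := minpoly.dvd ℚ β⁻¹ (p := p.map (algebraMap ℤ ℚ))
      (by rwa [aeval_map_algebraMap])
    rw [← aeval_map_algebraMap ℚ, hq, map_mul, hz, zero_mul]
  have hw : ∑ i ∈ Icc 1 k, ((L i : ℝ) : ℂ) * z⁻¹ ^ i = 1 := by
    rw [aeval_recurrencePoly _ _ hz0, mul_eq_zero, or_iff_right (pow_ne_zero k hz0),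
      sub_eq_zero] at hpz
    simpa using hpz.symm
  have hL : AntitoneOn (fun i => (L i : ℝ)) (Set.Icc 1 k) := fun i hi j hj hij =>
    Nat.cast_le.2 (hmono i j hi.1 hij hj.2)
  have hwβ := eq_of_sum_mul_pow_eq_one hk hL (by exact_mod_cast hpos) hβ0 hβ1.le hroot hw
    (by rw [norm_inv]; exact inv_le_one_of_one_le₀ hz1)
  exact hzβ (by rw [← inv_inv z, hwβ, Complex.ofReal_inv])
end

section
/- For all n ≥ 1 and all m ≥ 1, the inequality l_{n,1} + l_{n,2} + ... + l_{n,m} ≥ l_{n-1,1} + l_{n-1,2} + ... + l_{n-1,m+1} holds. -/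
/-! Row `n` of the recursion is row `n - 1` shifted down by one index, plus `L i * l_{n-1,1}` in
position `i`. Hence `l_{n,i} ≥ l_{n-1,i+1}` for every `i ≥ 1`, and at `i = 1` the extra term
`L 1 * l_{n-1,1} ≥ l_{n-1,1}` pays for the one summand on the left that the shift leaves over. -/

open Finset

theorem sum_Icc_succ_le_sum_Icc_of_shift_le {M : Type*} [AddCommMonoid M] [PartialOrder M]
    [IsOrderedAddMonoid M] {a b : ℕ → M} (h_one : a 1 + a 2 ≤ b 1)
    (h_shift : ∀ i, 2 ≤ i → a (i + 1) ≤ b i) :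
    ∀ m, 1 ≤ m → ∑ i ∈ Icc 1 (m + 1), a i ≤ ∑ i ∈ Icc 1 m, b i := by
  intro m hm
  induction m, hm using Nat.le_induction with
  | base => simpa [sum_Icc_succ_top] using h_one
  | succ m hm ih =>
    rw [sum_Icc_succ_top (by omega) a, sum_Icc_succ_top (by omega) b]
    exact add_le_add ih (h_shift (m + 1) (by omega))

section Recursion

variable {k : ℕ} {L : ℕ → ℕ} {l : ℕ → ℕ → ℕ}

theorem shifted_row_le_next_row (hbig : ∀ n j, k < j → l n j = 0)
    (hrec : ∀ n, 1 ≤ n → ∀ i, 1 ≤ i → i < k → l n i = l (n-1) (i+1) + L i * l (n-1) 1)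
    (n i : ℕ) (hi : 1 ≤ i) : l n (i + 1) ≤ l (n + 1) i := by
  rcases lt_or_ge i k with hik | hik
  · rw [hrec (n + 1) (by omega) i hi hik, Nat.add_sub_cancel]
    exact Nat.le_add_right _ _
  · rw [hbig n (i + 1) (by omega)]
    exact Nat.zero_le _

theorem row_one_add_row_two_le_next_row_one (hL1 : 1 ≤ L 1) (hbig : ∀ n j, k < j → l n j = 0)
    (hrec : ∀ n, 1 ≤ n → ∀ i, 1 ≤ i → i < k → l n i = l (n-1) (i+1) + L i * l (n-1) 1)
    (hreck : ∀ n, 1 ≤ n → l n k = L k * l (n-1) 1) (n : ℕ) :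
    l n 1 + l n 2 ≤ l (n + 1) 1 := by
  have hmul : l n 1 ≤ L 1 * l n 1 := Nat.le_mul_of_pos_left _ hL1
  rcases lt_trichotomy 1 k with hk | rfl | hk
  · rw [hrec (n + 1) (by omega) 1 le_rfl hk, Nat.add_sub_cancel, one_add_one_eq_two]
    omega
  · rw [hreck (n + 1) (by omega), Nat.add_sub_cancel, hbig n 2 (by omega)]
    omega
  · rw [hbig n 1 hk, hbig n 2 (by omega)]
    exact Nat.zero_le _

end Recursion

theorem stmt4_general (k : ℕ) (L : ℕ → ℕ) (hL1 : 1 ≤ L 1)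
    (l : ℕ → ℕ → ℕ)
    (hbig : ∀ n j, k < j → l n j = 0)
    (hrec : ∀ n, 1 ≤ n → ∀ i, 1 ≤ i → i < k → l n i = l (n-1) (i+1) + L i * l (n-1) 1)
    (hreck : ∀ n, 1 ≤ n → l n k = L k * l (n-1) 1) :
    ∀ n, 1 ≤ n → ∀ m, 1 ≤ m →
      ∑ i ∈ Finset.Icc 1 (m+1), l (n-1) i ≤ ∑ i ∈ Finset.Icc 1 m, l n i := by
  intro n hn
  obtain ⟨n, rfl⟩ : ∃ n', n = n' + 1 := ⟨n - 1, by omega⟩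
  rw [Nat.add_sub_cancel]
  exact sum_Icc_succ_le_sum_Icc_of_shift_le
    (row_one_add_row_two_le_next_row_one hL1 hbig hrec hreck n)
    (fun i hi => shifted_row_le_next_row hbig hrec n i (by omega))

/-- For all n ≥ 1 and all m ≥ 1, the inequality
l_{n,1} + ... + l_{n,m} ≥ l_{n-1,1} + ... + l_{n-1,m+1} holds. -/
theorem stmt4 (k : ℕ) (hk : 1 ≤ k) (L : ℕ → ℕ) (hL1 : 1 ≤ L 1) (hLk : 1 ≤ L k)
    (l : ℕ → ℕ → ℕ)
    (h01 : l 0 1 = 1) (h0j : ∀ j, 2 ≤ j → j ≤ k → l 0 j = 0)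
    (hbig : ∀ n j, k < j → l n j = 0)
    (hrec : ∀ n, 1 ≤ n → ∀ i, 1 ≤ i → i < k → l n i = l (n-1) (i+1) + L i * l (n-1) 1)
    (hreck : ∀ n, 1 ≤ n → l n k = L k * l (n-1) 1) :
    ∀ n, 1 ≤ n → ∀ m, 1 ≤ m →
      ∑ i ∈ Finset.Icc 1 (m+1), l (n-1) i ≤ ∑ i ∈ Finset.Icc 1 m, l n i :=
  stmt4_general k L hL1 l hbig hrec hreck
end

section
/- In every representation produced by the greedy digit algorithm, each digit η_i satisfies 0 ≤ η_i ≤ L_1 + L_2 + ... + L_k − 2. -/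
/-!
Summing the refinement recursion over `1 ≤ j ≤ p` shows that, with `S = L_1 + ⋯ + L_k`,
`∑_{j ≤ p} l_{m+1,j} + l_{m,1} ≤ ∑_{j ≤ p+1} l_{m,j} + S · l_{m,1}`.
The greedy remainder always satisfies `N_m < ∑_{j ≤ p} l_{m+1,j}` for the `p` with
`T_m = ∑_{j ≤ p+1} l_{m,j}`: at the top `p = k` and `N_n < t_{n+1}`; below a nonzero digit
`N_m` is a residue modulo `l_{m+1,1}` and `p = 1`; across a zero digit `N_m = N_{m+1} < T_{m+1}`
and the run of zeros grows by one. Hence `N_m - T_m < (S - 1) · l_{m,1}`, i.e. `η_m ≤ S - 2`.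
-/

open Finset

def IsZeroRun (e : ℕ → ℕ) (m a : ℕ) : Prop :=
  (∀ r, 1 ≤ r → r ≤ a → e (m + r) = 0) ∧ e (m + a + 1) = 1

namespace IsZeroRun

variable {e : ℕ → ℕ} {m a b : ℕ}

theorem le (ha : IsZeroRun e m a) (hb : IsZeroRun e m b) : a ≤ b := by
  by_contra! h
  have h0 := ha.1 (b + 1) (by omega) h
  rw [← add_assoc, hb.2] at h0
  exact one_ne_zero h0

theorem unique (ha : IsZeroRun e m a) (hb : IsZeroRun e m b) : a = b :=
  le_antisymm (ha.le hb) (hb.le ha)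

theorem zero (h : e (m + 1) = 1) : IsZeroRun e m 0 :=
  ⟨fun _ h1 _ => absurd h1 (by omega), h⟩

theorem cons (h0 : e (m + 1) = 0) (ha : IsZeroRun e (m + 1) a) : IsZeroRun e m (a + 1) := by
  refine ⟨fun r h1 h2 => ?_, by rw [show m + (a + 1) + 1 = m + 1 + a + 1 by omega]; exact ha.2⟩
  rcases h1.eq_or_lt with rfl | h1
  · exact h0
  · simpa [show m + 1 + (r - 1) = m + r by omega] using ha.1 (r - 1) (by omega) (by omega)

end IsZeroRun

theorem sum_Icc_one_succ (a : ℕ → ℕ) (p : ℕ) :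
    ∑ i ∈ Icc 1 (p + 1), a i = a 1 + ∑ i ∈ Icc 1 p, a (i + 1) := by
  rw [← insert_Icc_add_one_left_eq_Icc (by omega), sum_insert (by simp), ← map_add_right_Icc,
    sum_map]
  rfl

section Refinement

variable {k : ℕ} {L : ℕ → ℕ} {l : ℕ → ℕ → ℕ}

theorem refinement_succ (hbig : ∀ n j, k < j → l n j = 0)
    (hrec : ∀ n, 1 ≤ n → ∀ i, 1 ≤ i → i < k → l n i = l (n - 1) (i + 1) + L i * l (n - 1) 1)
    (hreck : ∀ n, 1 ≤ n → l n k = L k * l (n - 1) 1) (m i : ℕ) (hi : 1 ≤ i) :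
    l (m + 1) i = l m (i + 1) + (if i ≤ k then L i else 0) * l m 1 := by
  rcases lt_trichotomy i k with h | rfl | h
  · simpa [if_pos h.le] using hrec (m + 1) (by omega) i hi h
  · simpa [hbig m (i + 1) (by omega)] using hreck (m + 1) (by omega)
  · simp [hbig (m + 1) i h, hbig m (i + 1) (by omega), if_neg (not_le.mpr h)]

theorem refinement_one_pos
    (hstep : ∀ m i, 1 ≤ i → l (m + 1) i = l m (i + 1) + (if i ≤ k then L i else 0) * l m 1)
    (hk : 1 ≤ k) (hL1 : 1 ≤ L 1) (h01 : l 0 1 = 1) (m : ℕ) :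
    0 < l m 1 := by
  induction m with
  | zero => rw [h01]; exact one_pos
  | succ m ih =>
    rw [hstep m 1 le_rfl, if_pos hk]
    exact Nat.add_pos_right _ (Nat.mul_pos hL1 ih)

theorem sum_refinement_succ_add_le
    (hstep : ∀ m i, 1 ≤ i → l (m + 1) i = l m (i + 1) + (if i ≤ k then L i else 0) * l m 1)
    (m p : ℕ) :
    ∑ i ∈ Icc 1 p, l (m + 1) i + l m 1 ≤
      ∑ i ∈ Icc 1 (p + 1), l m i + (∑ i ∈ Icc 1 k, L i) * l m 1 := by
  have hcoeff : ∑ i ∈ Icc 1 p, (if i ≤ k then L i else 0) ≤ ∑ i ∈ Icc 1 k, L i := by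
    rw [← sum_filter]
    exact sum_le_sum_of_subset fun i hi => by simp only [mem_filter, mem_Icc] at hi ⊢; omega
  rw [sum_congr rfl fun i hi => hstep m i (mem_Icc.mp hi).1, sum_add_distrib, ← sum_mul,
    sum_Icc_one_succ]
  linarith [Nat.mul_le_mul_right (l m 1) hcoeff]

end Refinement

/-- A digit step of the greedy algorithm at remainder `N`, threshold `T` and weight `d = l_{m,1}`. -/
def GreedyStep (N T : ℤ) (d ε η : ℕ) : Prop :=
  N < T ∧ ε = 0 ∧ η = 0 ∨ ε = 1 ∧ (η : ℤ) = (N - T) / d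

theorem GreedyStep.le_sub_two {N : ℤ} {T d ε η S A : ℕ} (h : GreedyStep N T d ε η) (hd : 0 < d)
    (hN : N < A) (hA : A + d ≤ T + S * d) : η ≤ S - 2 := by
  rcases h with ⟨-, -, rfl⟩ | ⟨-, hη⟩
  · exact Nat.zero_le _
  · have : (η : ℤ) < S - 1 := by
      rw [hη]
      have hA' : (A + d : ℤ) ≤ T + S * d := by exact_mod_cast hA
      exact Int.ediv_lt_of_lt_mul (by exact_mod_cast hd) (by linarith)
    omega

theorem greedy_remainder_lt {n : ℕ} {l : ℕ → ℕ → ℕ} {Nv : ℕ → ℤ} {T eps eta J : ℕ → ℕ}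
    (hpos : ∀ m, 0 < l m 1) (hepsn : eps n = 1)
    (hJ : ∀ m, m < n → IsZeroRun eps m (J m))
    (hT : ∀ m, m < n → T m = ∑ i ∈ Icc 1 (J m + 2), l m i)
    (hNv : ∀ m, m < n →
      Nv m = Nv (m + 1) - (eps (m + 1) : ℤ) * T (m + 1) - (eta (m + 1) : ℤ) * l (m + 1) 1)
    (hstep : ∀ m, m ≤ n → GreedyStep (Nv m) (T m) (l m 1) (eps m) (eta m))
    {m : ℕ} (hm : m < n) :
    Nv m < ∑ i ∈ Icc 1 (J m + 1), l (m + 1) i := by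
  rcases hstep (m + 1) hm with ⟨hlt, he, hη⟩ | ⟨he, hη⟩
  · have hm1 : m + 1 < n := lt_of_le_of_ne hm (by rintro rfl; omega)
    rw [(hJ m hm).unique ((hJ (m + 1) hm1).cons he), hNv m hm, he, hη, ← hT (m + 1) hm1]
    simpa using hlt
  · have hd : (0 : ℤ) < l (m + 1) 1 := by exact_mod_cast hpos (m + 1)
    have hres := Int.emod_lt_of_pos (Nv (m + 1) - T (m + 1)) hd
    rw [Int.emod_def] at hres
    rw [(hJ m hm).unique (.zero he), hNv m hm, he, hη]
    simp only [zero_add, Icc_self, sum_singleton, Nat.cast_one, one_mul]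
    linarith

theorem stmt6_general (k : ℕ) (hk : 1 ≤ k) (L : ℕ → ℕ) (hL1 : 1 ≤ L 1)
    (l : ℕ → ℕ → ℕ)
    (h01 : l 0 1 = 1)
    (hbig : ∀ n j, k < j → l n j = 0)
    (hrec : ∀ n, 1 ≤ n → ∀ i, 1 ≤ i → i < k → l n i = l (n-1) (i+1) + L i * l (n-1) 1)
    (hreck : ∀ n, 1 ≤ n → l n k = L k * l (n-1) 1)
    (t : ℕ → ℕ) (ht : ∀ n, t n = ∑ i ∈ Finset.Icc 1 k, l n i)
    (N n : ℕ) (hN2 : N < t (n+1))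
    (Nv : ℕ → ℤ) (T : ℕ → ℕ) (eps eta J : ℕ → ℕ)
    (hNn : Nv n = N) (hTn : T n = t n) (hepsn : eps n = 1)
    (hetan : (eta n : ℤ) = ((N : ℤ) - (t n : ℤ)) / (l n 1 : ℤ))
    (hJ : ∀ m, m < n → (∀ r, 1 ≤ r → r ≤ J m → eps (m + r) = 0) ∧ eps (m + J m + 1) = 1)
    (hT : ∀ m, m < n → T m = ∑ i ∈ Finset.Icc 1 (J m + 2), l m i)
    (hNv : ∀ m, m < n →
      Nv m = Nv (m+1) - (eps (m+1) : ℤ) * (T (m+1) : ℤ) - (eta (m+1) : ℤ) * (l (m+1) 1 : ℤ))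
    (hbr0 : ∀ m, m < n → Nv m < (T m : ℤ) → eps m = 0 ∧ eta m = 0)
    (hbr1 : ∀ m, m < n → (T m : ℤ) ≤ Nv m →
      eps m = 1 ∧ (eta m : ℤ) = (Nv m - (T m : ℤ)) / (l m 1 : ℤ)) :
    ∀ i, i ≤ n → eta i ≤ (∑ r ∈ Finset.Icc 1 k, L r) - 2 := by
  have hl := refinement_succ hbig hrec hreck
  have hpos := refinement_one_pos hl hk hL1 h01
  have hstep : ∀ m, m ≤ n → GreedyStep (Nv m) (T m) (l m 1) (eps m) (eta m) := by
    intro m hm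
    rcases hm.lt_or_eq with hm | rfl
    · rcases lt_or_ge (Nv m) (T m) with h | h
      · exact .inl ⟨h, hbr0 m hm h⟩
      · exact .inr (hbr1 m hm h)
    · exact .inr ⟨hepsn, by rw [hetan, hNn, hTn]⟩
  have hwindow : ∀ i, i ≤ n →
      ∃ p, Nv i < ∑ j ∈ Icc 1 p, l (i + 1) j ∧ T i = ∑ j ∈ Icc 1 (p + 1), l i j := by
    intro i hi
    rcases hi.lt_or_eq with hi | rfl
    · exact ⟨J i + 1, greedy_remainder_lt hpos hepsn hJ hT hNv hstep hi, hT i hi⟩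
    · refine ⟨k, by rw [hNn, ← ht]; exact_mod_cast hN2, ?_⟩
      rw [hTn, ht, sum_Icc_succ_top (by omega), hbig i (k + 1) (by omega), add_zero]
  intro i hi
  obtain ⟨p, hNi, hTi⟩ := hwindow i hi
  exact (hstep i hi).le_sub_two (hpos i) hNi (hTi ▸ sum_refinement_succ_add_le hl i p)

/-- In every representation produced by the greedy digit algorithm, each digit η_i satisfies
0 ≤ η_i ≤ L_1 + ... + L_k − 2.  The greedy algorithm is encoded by hypotheses on the
functions `Nv` (the remainders N_m), `T`, `eps` (ε) and `eta` (η), and `J m` is the number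
of consecutive zero ε's directly above index m. -/
theorem stmt6 (k : ℕ) (hk : 1 ≤ k) (L : ℕ → ℕ) (hL1 : 1 ≤ L 1) (hLk : 1 ≤ L k)
    (hS : 2 ≤ ∑ i ∈ Finset.Icc 1 k, L i)
    (l : ℕ → ℕ → ℕ)
    (h01 : l 0 1 = 1) (h0j : ∀ j, 2 ≤ j → l 0 j = 0)
    (hbig : ∀ n j, k < j → l n j = 0)
    (hrec : ∀ n, 1 ≤ n → ∀ i, 1 ≤ i → i < k → l n i = l (n-1) (i+1) + L i * l (n-1) 1)
    (hreck : ∀ n, 1 ≤ n → l n k = L k * l (n-1) 1)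
    (t : ℕ → ℕ) (ht : ∀ n, t n = ∑ i ∈ Finset.Icc 1 k, l n i)
    (N n : ℕ) (hN1 : t n ≤ N) (hN2 : N < t (n+1))
    (Nv : ℕ → ℤ) (T : ℕ → ℕ) (eps eta J : ℕ → ℕ)
    (hNn : Nv n = N) (hTn : T n = t n) (hepsn : eps n = 1)
    (hetan : (eta n : ℤ) = ((N : ℤ) - (t n : ℤ)) / (l n 1 : ℤ))
    (hJ : ∀ m, m < n → (∀ r, 1 ≤ r → r ≤ J m → eps (m + r) = 0) ∧ eps (m + J m + 1) = 1)
    (hT : ∀ m, m < n → T m = ∑ i ∈ Finset.Icc 1 (J m + 2), l m i)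
    (hNv : ∀ m, m < n →
      Nv m = Nv (m+1) - (eps (m+1) : ℤ) * (T (m+1) : ℤ) - (eta (m+1) : ℤ) * (l (m+1) 1 : ℤ))
    (hbr0 : ∀ m, m < n → Nv m < (T m : ℤ) → eps m = 0 ∧ eta m = 0)
    (hbr1 : ∀ m, m < n → (T m : ℤ) ≤ Nv m →
      eps m = 1 ∧ (eta m : ℤ) = (Nv m - (T m : ℤ)) / (l m 1 : ℤ)) :
    ∀ i, i ≤ n → eta i ≤ (∑ r ∈ Finset.Icc 1 k, L r) - 2 :=
  stmt6_general k hk L hL1 l h01 hbig hrec hreck t ht N n hN2 Nv T eps eta J hNn hTn hepsn hetan hJ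
    hT hNv hbr0 hbr1
end

section
/- For the identity (L_1 + ... + L_{m-1} − 1)·l_{n,1} + (l_{n,1} + ... + l_{n,m}) = l_{n+1,1} + ... + l_{n+1,m-1} holds for all n ≥ 0 and 2 ≤ m ≤ k. -/
open Finset

theorem sum_Icc_one_succ_s11 {M : Type*} [AddCommMonoid M] (f : ℕ → M) (m : ℕ) :
    ∑ r ∈ Icc 1 (m + 1), f r = f 1 + ∑ r ∈ Icc 1 m, f (r + 1) := by
  induction m with
  | zero => simp
  | succ m ih =>
    rw [sum_Icc_succ_top (by omega), ih, sum_Icc_succ_top (by omega), add_assoc]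

theorem Nat.sub_one_mul_add_add {S : ℕ} (hS : 1 ≤ S) (a b : ℕ) :
    (S - 1) * a + (a + b) = b + S * a := by
  obtain ⟨T, rfl⟩ := Nat.exists_eq_add_of_le' hS
  rw [Nat.add_sub_cancel]
  ring

theorem stmt11_general (k : ℕ) (L : ℕ → ℕ) (hL1 : 1 ≤ L 1)
    (l : ℕ → ℕ → ℕ)
    (hrec : ∀ n, 1 ≤ n → ∀ i, 1 ≤ i → i < k → l n i = l (n-1) (i+1) + L i * l (n-1) 1) :
    ∀ n, ∀ m, 2 ≤ m → m ≤ k →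
      ((∑ r ∈ Finset.Icc 1 (m-1), L r) - 1) * l n 1 + ∑ r ∈ Finset.Icc 1 m, l n r
        = ∑ r ∈ Finset.Icc 1 (m-1), l (n+1) r := by
  intro n m hm hmk
  obtain ⟨j, rfl⟩ : ∃ j, m = j + 1 := ⟨m - 1, by omega⟩
  have hS : 1 ≤ ∑ r ∈ Icc 1 j, L r :=
    hL1.trans (single_le_sum (fun _ _ => Nat.zero_le _) (mem_Icc.2 ⟨le_rfl, by omega⟩))
  have step : ∀ r ∈ Icc 1 j, l (n + 1) r = l n (r + 1) + L r * l n 1 := by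
    intro r hr
    obtain ⟨hr1, hrj⟩ := mem_Icc.1 hr
    simpa using hrec (n + 1) (by omega) r hr1 (by omega)
  rw [Nat.add_sub_cancel, sum_congr rfl step, sum_add_distrib, ← sum_mul, sum_Icc_one_succ_s11]
  exact Nat.sub_one_mul_add_add hS _ _

/-- The identity (L_1 + ... + L_{m-1} − 1)·l_{n,1} + (l_{n,1} + ... + l_{n,m})
= l_{n+1,1} + ... + l_{n+1,m-1} holds for all n ≥ 0 and 2 ≤ m ≤ k. -/
theorem stmt11 (k : ℕ) (hk : 2 ≤ k) (L : ℕ → ℕ) (hL1 : 1 ≤ L 1) (hLk : 1 ≤ L k)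
    (l : ℕ → ℕ → ℕ)
    (h01 : l 0 1 = 1) (h0j : ∀ j, 2 ≤ j → j ≤ k → l 0 j = 0)
    (hrec : ∀ n, 1 ≤ n → ∀ i, 1 ≤ i → i < k → l n i = l (n-1) (i+1) + L i * l (n-1) 1)
    (hreck : ∀ n, 1 ≤ n → l n k = L k * l (n-1) 1) :
    ∀ n, ∀ m, 2 ≤ m → m ≤ k →
      ((∑ r ∈ Finset.Icc 1 (m-1), L r) - 1) * l n 1 + ∑ r ∈ Finset.Icc 1 m, l n r
        = ∑ r ∈ Finset.Icc 1 (m-1), l (n+1) r :=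
  stmt11_general k L hL1 l hrec
end

section
/- For the classical LS-sequence with L ≥ S ≥ 1, the normalized limiting discrepancy constant satisfies, for fixed S as L → ∞, the asymptotic ((2L+S−2)/|log β|)·(R̃/(1−Sβ) + 1) ~ 2L/log L, where R̃ = max{|τ_1|, |τ_1 + (L+S−2)λ_1|} with τ_1 = (−L−2S+√(L²+4S))/(2√(L²+4S)), λ_1 = (−L+√(L²+4S))/(2√(L²+4S)), and β = (−L+√(L²+4S))/(2S). -/
/-!
With `r = √(L² + 4S)` one has `r - L = 4S / (r + L) → 0`, so
`β = (r - L) / (2S) = 2 / (L + r)` satisfies `L β → 1`; hence `|log β| ~ log L`, while `τ₁`,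
`(L + S - 2) λ₁` and so `R̃` tend to `0` and `1 - Sβ → 1`. The quotient therefore behaves like
`(2L + S - 2) / (2L) → 1`.
-/

open Filter Topology Real

lemma eventually_sq_add_nonneg (c : ℝ) : ∀ᶠ x : ℝ in atTop, 0 ≤ x ^ 2 + c := by
  filter_upwards [(tendsto_pow_atTop two_ne_zero).eventually_ge_atTop (-c)] with x hx
  linarith

lemma tendsto_sqrt_sq_add_sub_self (c : ℝ) :
    Tendsto (fun x : ℝ => √(x ^ 2 + c) - x) atTop (𝓝 0) := by
  have hden : Tendsto (fun x : ℝ => √(x ^ 2 + c) + x) atTop atTop :=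
    tendsto_atTop_add_left_of_le _ 0 (fun _ => sqrt_nonneg _) tendsto_id
  refine (hden.const_div_atTop c).congr' ?_
  filter_upwards [eventually_sq_add_nonneg c, eventually_gt_atTop 0] with x hx hx0
  have hpos : 0 < √(x ^ 2 + c) + x := by positivity
  rw [div_eq_iff hpos.ne']
  nlinarith [sq_sqrt hx]

lemma tendsto_sqrt_sq_add_atTop (c : ℝ) :
    Tendsto (fun x : ℝ => √(x ^ 2 + c)) atTop atTop :=
  (tendsto_id.atTop_add (tendsto_sqrt_sq_add_sub_self c)).congr fun x => by simp

lemma tendsto_sqrt_sq_add_div_self (c : ℝ) :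
    Tendsto (fun x : ℝ => √(x ^ 2 + c) / x) atTop (𝓝 1) := by
  have h := ((tendsto_sqrt_sq_add_sub_self c).mul tendsto_inv_atTop_zero).const_add 1
  rw [mul_zero, add_zero] at h
  refine h.congr' ?_
  filter_upwards [eventually_ne_atTop 0] with x hx
  field_simp
  ring

lemma tendsto_log_div_log_of_tendsto_mul {u : ℝ → ℝ} {c : ℝ} (hc : 0 < c)
    (hu : Tendsto (fun x => x * u x) atTop (𝓝 c)) :
    Tendsto (fun x => log (u x) / log x) atTop (𝓝 (-1)) := by
  have h := ((hu.log hc.ne').div_atTop tendsto_log_atTop).sub_const 1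
  rw [zero_sub] at h
  refine h.congr' ?_
  filter_upwards [hu.eventually_const_lt hc, eventually_gt_atTop 1] with x hxu hx
  have hlog : log x ≠ 0 := (log_pos hx).ne'
  have hux : u x ≠ 0 := right_ne_zero_of_mul hxu.ne'
  rw [log_mul (by positivity) hux]
  field_simp
  ring

namespace LSSequence

/- The quantities of the LS-sequence as functions of a real variable `x` in place of `L`. -/

variable (s : ℝ)

noncomputable def root (x : ℝ) : ℝ := √(x ^ 2 + 4 * s)

noncomputable def beta (x : ℝ) : ℝ := (-x + root s x) / (2 * s)

noncomputable def tau₁ (x : ℝ) : ℝ := (-x - 2 * s + root s x) / (2 * root s x)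

noncomputable def lambda₁ (x : ℝ) : ℝ := (-x + root s x) / (2 * root s x)

noncomputable def rTilde (x : ℝ) : ℝ :=
  max |tau₁ s x| |tau₁ s x + (x + s - 2) * lambda₁ s x|

noncomputable def discrepancyConstant (x : ℝ) : ℝ :=
  (2 * x + s - 2) / |log (beta s x)| * (rTilde s x / (1 - s * beta s x) + 1)

lemma tendsto_beta : Tendsto (beta s) atTop (𝓝 0) := by
  have h := (tendsto_sqrt_sq_add_sub_self (4 * s)).div_const (2 * s)
  rw [zero_div] at h
  exact h.congr fun x => by rw [beta, root, neg_add_eq_sub]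

lemma tendsto_mul_beta {s : ℝ} (hs : s ≠ 0) :
    Tendsto (fun x => x * beta s x) atTop (𝓝 1) := by
  have h : Tendsto (fun x => 2 / (√(x ^ 2 + 4 * s) / x + 1)) atTop (𝓝 (2 / (1 + 1))) :=
    tendsto_const_nhds.div ((tendsto_sqrt_sq_add_div_self (4 * s)).add_const 1) (by norm_num)
  norm_num at h
  refine h.congr' ?_
  filter_upwards [eventually_sq_add_nonneg (4 * s), eventually_gt_atTop 0] with x hx hx0
  have hr := sq_sqrt hx
  have hpos : 0 < √(x ^ 2 + 4 * s) / x + 1 := by positivity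
  rw [beta, root, div_eq_iff hpos.ne']
  field_simp
  linear_combination -hr

lemma tendsto_abs_log_beta_div_log {s : ℝ} (hs : s ≠ 0) :
    Tendsto (fun x => |log (beta s x)| / log x) atTop (𝓝 1) := by
  have h := (tendsto_log_div_log_of_tendsto_mul one_pos (tendsto_mul_beta hs)).abs
  rw [abs_neg, abs_one] at h
  refine h.congr' ?_
  filter_upwards [eventually_gt_atTop 1] with x hx
  rw [abs_div, abs_of_pos (log_pos hx)]

lemma tendsto_tau₁ : Tendsto (tau₁ s) atTop (𝓝 0) := by
  have h := ((tendsto_sqrt_sq_add_sub_self (4 * s)).sub_const (2 * s)).div_atTop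
    ((tendsto_sqrt_sq_add_atTop (4 * s)).const_mul_atTop two_pos)
  exact h.congr fun x => by rw [tau₁, root]; ring_nf

lemma tendsto_mul_lambda₁ : Tendsto (fun x => (x + s - 2) * lambda₁ s x) atTop (𝓝 0) := by
  have hquot : Tendsto (fun x => (x + s - 2) / root s x) atTop (𝓝 1) := by
    have h := ((tendsto_sqrt_sq_add_div_self (4 * s)).inv₀ one_ne_zero).add
      ((tendsto_sqrt_sq_add_atTop (4 * s)).const_div_atTop (s - 2))
    rw [inv_one, add_zero] at h
    exact h.congr fun x => by rw [root, inv_div, ← add_div]; ring_nf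
  have h := ((tendsto_sqrt_sq_add_sub_self (4 * s)).mul hquot).div_const 2
  rw [zero_mul, zero_div] at h
  exact h.congr fun x => by rw [lambda₁, root]; ring

lemma tendsto_rTilde : Tendsto (rTilde s) atTop (𝓝 0) := by
  have h := (tendsto_tau₁ s).abs.max ((tendsto_tau₁ s).add (tendsto_mul_lambda₁ s)).abs
  rw [add_zero, abs_zero, max_self] at h
  exact h

theorem tendsto_discrepancyConstant_div_log {s : ℝ} (hs : s ≠ 0) :
    Tendsto (fun x => discrepancyConstant s x / (2 * x / log x)) atTop (𝓝 1) := by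
  have hlin : Tendsto (fun x : ℝ => (2 * x + s - 2) / (2 * x)) atTop (𝓝 1) := by
    have h := (tendsto_inv_atTop_zero.const_mul ((s - 2) / 2)).const_add 1
    rw [mul_zero, add_zero] at h
    refine h.congr' ?_
    filter_upwards [eventually_ne_atTop 0] with x hx
    field_simp
    ring
  have hlog := (tendsto_abs_log_beta_div_log hs).inv₀ one_ne_zero
  have hR : Tendsto (fun x => rTilde s x / (1 - s * beta s x) + 1) atTop
      (𝓝 (0 / (1 - s * 0) + 1)) :=
    ((tendsto_rTilde s).div (((tendsto_beta s).const_mul s).const_sub 1) (by simp)).add_const 1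
  rw [inv_one] at hlog
  rw [mul_zero, sub_zero, zero_div, zero_add] at hR
  have h := (hlin.mul hlog).mul hR
  rw [one_mul, one_mul] at h
  refine h.congr fun x => ?_
  rw [discrepancyConstant]
  ring

end LSSequence

/-- For the classical LS-sequence with L ≥ S ≥ 1 and S fixed, as L → ∞ the discrepancy
constant satisfies ((2L+S−2)/|log β|)·(R̃/(1−Sβ) + 1) ~ 2L/log L. -/
theorem stmt18 (S : ℕ) (hS : 0 < S) :
    Tendsto (fun L : ℕ =>
      (((2*(L : ℝ) + (S : ℝ) - 2) /
          |Real.log ((-(L : ℝ) + Real.sqrt ((L : ℝ)^2 + 4*S)) / (2*S))|) *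
        ((max |(-(L : ℝ) - 2*S + Real.sqrt ((L : ℝ)^2 + 4*S)) / (2*Real.sqrt ((L : ℝ)^2 + 4*S))|
              |(-(L : ℝ) - 2*S + Real.sqrt ((L : ℝ)^2 + 4*S)) / (2*Real.sqrt ((L : ℝ)^2 + 4*S))
                + ((L : ℝ) + (S : ℝ) - 2) *
                  ((-(L : ℝ) + Real.sqrt ((L : ℝ)^2 + 4*S)) / (2*Real.sqrt ((L : ℝ)^2 + 4*S)))|)
            / (1 - (S : ℝ) * ((-(L : ℝ) + Real.sqrt ((L : ℝ)^2 + 4*S)) / (2*S))) + 1))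
        / (2*(L : ℝ) / Real.log (L : ℝ)))
      atTop (nhds 1) :=
  (LSSequence.tendsto_discrepancyConstant_div_log (Nat.cast_ne_zero.mpr hS.ne')).comp
    tendsto_natCast_atTop_atTop
end
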